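/- Let w ∈ S_n. Suppose u is special (k−1)-superior to w of degree p but not special k-superior to w of degree p. Then there exists a unique q < k such that u·t_{q,k} is special (k−1)-superior to w of degree p−1; moreover, for every q' > k, u·t_{k,q'} is not special (k−1)-superior to w of degree p−1. -/

import Mathlib

open Equiv MvPolynomial
open scoped Classical

/-- Coxeter length of a permutation of `Fin n`: the number of inversions. -/
noncomputable def len {n : ℕ} (w : Equiv.Perm (Fin n)) : ℕ :=
  (Finset.univ.filter (fun p : Fin n × Fin n => p.1 < p.2 ∧ w p.2 < w p.1)).card

/-- The simple reflection swapping the 0-based positions `a` and `a+1`;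
this is the 1-based simple reflection `s_{a+1}`. -/
def sr0 (n : ℕ) (a : ℕ) : Equiv.Perm (Fin n) :=
  if h : a + 1 < n then Equiv.swap ⟨a, Nat.lt_of_succ_lt h⟩ ⟨a + 1, h⟩ else 1

/-- `c[k,m] = s_{k-m+1} ⋯ s_{k-1} s_k` (1-based indices), with `c[k,0] = e`. -/
def cyc (n k m : ℕ) : Equiv.Perm (Fin n) :=
  ((List.range m).map (fun t => sr0 n (k - m + t))).prod

/-- The coordinate weight `L_i` (1-based), i.e. the variable `X (i-1)`. -/
noncomputable def LL (n : ℕ) (i : ℕ) : MvPolynomial (Fin n) ℚ :=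
  if h : i - 1 < n then X ⟨i - 1, h⟩ else 0

/-- The simple root `α_{a+1} = L_{a+1} - L_{a+2}` (0-based `a`). -/
noncomputable def alphaR (n a : ℕ) : MvPolynomial (Fin n) ℚ :=
  if h : a + 1 < n then X ⟨a, Nat.lt_of_succ_lt h⟩ - X ⟨a + 1, h⟩ else 0

/-- The fundamental weight `χ_i = L_1 + ⋯ + L_i` (1-based `i`). -/
noncomputable def chiW (n i : ℕ) : MvPolynomial (Fin n) ℚ :=
  ∑ j ∈ Finset.univ.filter (fun j : Fin n => (j : ℕ) < i), X j

/-- `∏_{β ∈ Δ₊ ∩ w⁻¹Δ₋} β`, the value `ξ^w(w)`. -/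
noncomputable def topVal {n : ℕ} (w : Equiv.Perm (Fin n)) : MvPolynomial (Fin n) ℚ :=
  ∏ p ∈ Finset.univ.filter (fun p : Fin n × Fin n => p.1 < p.2 ∧ w p.2 < w p.1),
    (X p.1 - X p.2)

/-- Bruhat order on the symmetric group. -/
def bruhatLE {n : ℕ} (w v : Equiv.Perm (Fin n)) : Prop :=
  Relation.ReflTransGen
    (fun x y => (∃ i j : Fin n, y = x * Equiv.swap i j) ∧ len y = len x + 1) w v

/-- The characterization of the family of equivariant Schubert classes `ξ^w : W → S(h*)`:
support condition, value at `w`, and the divided-difference recursion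
`𝒜_a ξ^w = ξ^{w s_a}` if `w s_a < w` and `0` otherwise, where
`(𝒜_a f)(v) = (f(v s_a) - f(v))/(v·α_a)`. -/
def IsXi {n : ℕ} (xi : Equiv.Perm (Fin n) → Equiv.Perm (Fin n) → MvPolynomial (Fin n) ℚ) :
    Prop :=
  (∀ w v, ¬ bruhatLE w v → xi w v = 0) ∧
  (∀ w, xi w w = topVal w) ∧
  (∀ w v (a : ℕ), a + 1 < n →
    (len (w * sr0 n a) < len w →
      xi w (v * sr0 n a) - xi w v = (rename ⇑v (alphaR n a)) * xi (w * sr0 n a) v) ∧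
    (len w < len (w * sr0 n a) → xi w (v * sr0 n a) = xi w v))

/-- The permutation `t_{i_1,q} ⋯ t_{i_s,q}` determined by the list `l = [i_1, …, i_s]`
and the index `q`. -/
def cycPerm {n : ℕ} (l : List (Fin n)) (q : Fin n) : Equiv.Perm (Fin n) :=
  (l.map (fun i => Equiv.swap i q)).prod

/-- The data `(l, q)` with `l = [i_1, …, i_s]` defines a cycle `ζ = t_{i_1,q} ⋯ t_{i_s,q}`
such that `wζ` is special `k`-superior to `w` of degree `s` (1-based `k`):
`i_1, …, i_s ≤ k < q`, `w(q) > w(i_1) > ⋯ > w(i_s)`, and `ℓ(wζ) = ℓ(w) + s`. -/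
def IsSpecialCycle {n : ℕ} (w : Equiv.Perm (Fin n)) (k : ℕ) (l : List (Fin n)) (q : Fin n) :
    Prop :=
  l ≠ [] ∧ (q :: l).Nodup ∧ (∀ i ∈ l, (i : ℕ) < k) ∧ k ≤ (q : ℕ) ∧
  (q :: l).Chain' (fun a b => w b < w a) ∧
  len (w * cycPerm l q) = len w + l.length

/-- `u` is special `k`-superior to `w` of degree `p` (1-based `k`):
`u = w ζ₁ ⋯ ζ_r` for pairwise disjoint cycles `ζ_i` as in `IsSpecialCycle`,
with degrees summing to `p`. -/
def SpecialSuperior {n : ℕ} (w u : Equiv.Perm (Fin n)) (k p : ℕ) : Prop :=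
  ∃ L : List (List (Fin n) × Fin n),
    (∀ c ∈ L, IsSpecialCycle w k c.1 c.2) ∧
    L.Pairwise (fun c d => ∀ x ∈ c.2 :: c.1, x ∉ d.2 :: d.1) ∧
    u = w * (L.map (fun c => cycPerm c.1 c.2)).prod ∧
    (L.map (fun c => c.1.length)).sum = p

/-- The set of indices of `u > w`: `𝓘 = {i ≤ k | w⁻¹u(i) ≠ i}` (stored 0-based,
so `i` ranges over 0-based positions `< k`). -/
noncomputable def idxSet {n : ℕ} (w u : Equiv.Perm (Fin n)) (k : ℕ) : Finset ℕ :=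
  (Finset.range k).filter (fun i => ∃ h : i < n, (w⁻¹ * u) ⟨i, h⟩ ≠ ⟨i, h⟩)

/-- The 0-based positions `< k` not in `𝓘`, listed in decreasing order; its `(j-1)`-st
entry is the 0-based version of `r_j`. -/
noncomputable def freeList {n : ℕ} (w u : Equiv.Perm (Fin n)) (k : ℕ) : List ℕ :=
  (((Finset.range k) \ idxSet w u k).sort (· ≤ ·)).reverse

/-- `λ_j = #{i ∈ 𝓘 | i < r_j}` (1-based `j`). -/
noncomputable def lamFn {n : ℕ} (w u : Equiv.Perm (Fin n)) (k : ℕ) (j : ℕ) : ℕ :=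
  ((idxSet w u k).filter (fun i => i < (freeList w u k).getD (j - 1) 0)).card

/-- The associated element `v(u,w,k) = w π₁ π₂ ⋯ π_{k-p}` where
`π_j = s_{λ_{k-p-j+1}+j-1} ⋯ s_{j+1} s_j` (1-based) if `λ_{k-p-j+1} ≠ 0` and `π_j = e`
otherwise. -/
noncomputable def assocElt {n : ℕ} (w u : Equiv.Perm (Fin n)) (k p : ℕ) :
    Equiv.Perm (Fin n) :=
  w * ((List.range (k - p)).map (fun j0 =>
        ((List.range (lamFn w u k (k - p - j0))).reverse.map
          (fun t => sr0 n (j0 + t))).prod)).prod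


section Helpers
variable {n : ℕ}

lemma cycPerm_nil (q : Fin n) : cycPerm [] q = 1 := rfl

lemma cycPerm_cons (i : Fin n) (l : List (Fin n)) (q : Fin n) :
    cycPerm (i :: l) q = Equiv.swap i q * cycPerm l q := by
  simp [cycPerm]

lemma cycPerm_concat (l : List (Fin n)) (a q : Fin n) :
    cycPerm (l ++ [a]) q = cycPerm l q * Equiv.swap a q := by
  simp [cycPerm]

lemma cycPerm_fix {l : List (Fin n)} {q x : Fin n} (hq : x ≠ q) (hl : x ∉ l) :
    cycPerm l q x = x := by
  induction l with
  | nil => rfl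
  | cons i t ih =>
      rw [cycPerm_cons]
      have hxi : x ≠ i := fun h => hl (h ▸ (List.mem_cons_self (a := i) (l := t)))
      rw [Equiv.Perm.mul_apply, ih (fun h => hl (List.mem_cons_of_mem _ h)),
        Equiv.swap_apply_of_ne_of_ne hxi hq]

lemma cycPerm_apply_q {l : List (Fin n)} {q : Fin n} (hl : l ≠ [])
    (hnd : (q :: l).Nodup) : cycPerm l q q = l.getLast hl := by
  induction l with
  | nil => exact absurd rfl hl
  | cons i t ih =>
      rw [cycPerm_cons, Equiv.Perm.mul_apply]
      rcases eq_or_ne t [] with rfl | ht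
      · simp [cycPerm]
      · have hnd' : (q :: t).Nodup := by
          simp only [List.nodup_cons] at hnd ⊢
          exact ⟨fun h => hnd.1 (List.mem_cons_of_mem _ h), hnd.2.2⟩
        rw [ih ht hnd']
        have hmem := List.getLast_mem ht
        have h1 : t.getLast ht ≠ i := by
          intro h; simp only [List.nodup_cons] at hnd; exact hnd.2.1 (h ▸ hmem)
        have h2 : t.getLast ht ≠ q := by
          intro h; simp only [List.nodup_cons] at hnd
          exact hnd.1 (List.mem_cons_of_mem _ (h ▸ hmem))
        rw [Equiv.swap_apply_of_ne_of_ne h1 h2, List.getLast_cons ht]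


lemma cycPerm_mem {l : List (Fin n)} {q x : Fin n} (hx : x ∈ q :: l) :
    cycPerm l q x ∈ q :: l := by
  by_contra h
  simp only [List.mem_cons, not_or] at h
  have h1 : cycPerm l q (cycPerm l q x) = cycPerm l q x :=
    cycPerm_fix h.1 h.2
  have h2 := (cycPerm l q).injective h1
  rw [h2] at h
  rcases List.mem_cons.mp hx with rfl | hxl
  · exact h.1 rfl
  · exact h.2 hxl

lemma cycPerm_moves {l : List (Fin n)} {q : Fin n} (hl : l ≠ [])
    (hnd : (q :: l).Nodup) : ∀ x ∈ q :: l, cycPerm l q x ≠ x := by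
  induction l with
  | nil => exact absurd rfl hl
  | cons i t ih =>
      intro x hx
      simp only [List.nodup_cons, List.mem_cons, not_or] at hnd
      obtain ⟨⟨hqi, hqt⟩, hit, hndt⟩ := hnd
      simp only [List.mem_cons] at hx
      rw [cycPerm_cons, Equiv.Perm.mul_apply]
      rcases hx with rfl | rfl | hxt
      · -- x = q
        rcases eq_or_ne t [] with rfl | ht
        · simp only [cycPerm, List.map_cons, List.map_nil, List.prod_cons,
            List.prod_nil, mul_one, Equiv.Perm.mul_apply, Equiv.Perm.one_apply,
            Equiv.swap_apply_right]
          exact fun h => hqi h.symm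
        · rw [cycPerm_apply_q ht (by simp only [List.nodup_cons]; exact ⟨hqt, hndt⟩)]
          have hmem := List.getLast_mem ht
          rw [Equiv.swap_apply_of_ne_of_ne
            (fun h => hit (by rw [← h]; exact hmem))
            (fun h => hqt (by rw [← h]; exact hmem))]
          exact fun h => hqt (by rw [← h]; exact hmem)
      · -- x = i
        rw [cycPerm_fix (fun h => hqi h.symm) hit, Equiv.swap_apply_left]
        exact fun h => hqi h
      · -- x ∈ t
        have hxq : x ≠ q := fun h => hqt (h ▸ hxt)
        have hxi : x ≠ i := fun h => hit (h ▸ hxt)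
        have ht : t ≠ [] := List.ne_nil_of_mem hxt
        have hg := ih ht (by simp only [List.nodup_cons]; exact ⟨hqt, hndt⟩) x
          (List.mem_cons_of_mem _ hxt)
        have hgm := cycPerm_mem (l := t) (q := q) (List.mem_cons_of_mem _ hxt)
        rcases List.mem_cons.mp hgm with hgq | hgt
        · rw [hgq, Equiv.swap_apply_right]; exact Ne.symm hxi
        · rw [Equiv.swap_apply_of_ne_of_ne
            (fun h => hit (by rw [← h]; exact hgt))
            (fun h => hqt (by rw [← h]; exact hgt))]
          exact hg

lemma support_cycPerm {l : List (Fin n)} {q : Fin n} (hl : l ≠ [])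
    (hnd : (q :: l).Nodup) : (cycPerm l q).support = (q :: l).toFinset := by
  ext x
  simp only [Equiv.Perm.mem_support, List.mem_toFinset]
  constructor
  · intro h
    by_contra hx
    simp only [List.mem_cons, not_or] at hx
    exact h (cycPerm_fix hx.1 hx.2)
  · intro hx
    exact cycPerm_moves hl hnd x (by simpa using hx)

lemma cycPerm_disjoint {l l' : List (Fin n)} {q q' : Fin n}
    (h : ∀ x ∈ q :: l, x ∉ q' :: l') :
    Equiv.Perm.Disjoint (cycPerm l q) (cycPerm l' q') := by
  intro x
  by_cases hx : x ∈ q :: l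
  · right
    have := h x hx
    simp only [List.mem_cons, not_or] at this
    exact cycPerm_fix this.1 this.2
  · left
    simp only [List.mem_cons, not_or] at hx
    exact cycPerm_fix hx.1 hx.2


lemma len_mul_swap_ge (x : Equiv.Perm (Fin n)) {a b : Fin n}
    (hab : a < b) (hx : x a < x b) : len x + 1 ≤ len (x * Equiv.swap a b) := by
  classical
  set t := Equiv.swap a b with ht
  have htab : t a = b := Equiv.swap_apply_left a b
  have htba : t b = a := Equiv.swap_apply_right a b
  have htfix : ∀ y : Fin n, y ≠ a → y ≠ b → t y = y := fun y h1 h2 =>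
    Equiv.swap_apply_of_ne_of_ne h1 h2
  have hxt : ∀ y : Fin n, (x * t) y = x (t y) := fun y => rfl
  set C : Fin n × Fin n → Prop := fun p => (p.1 = a ∧ p.2 ≤ b) ∨ (p.2 = b ∧ a < p.1)
    with hC
  set F : Fin n × Fin n → Fin n × Fin n := fun p => if C p then p else (t p.1, t p.2)
    with hF
  have hFkeep : ∀ p, C p → F p = p := fun p hp => by simp only [hF, if_pos hp]
  have hFswap : ∀ p, ¬ C p → F p = (t p.1, t p.2) := fun p hp => by
    simp only [hF, if_neg hp]
  set D : Finset (Fin n × Fin n) := insert (a, b)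
    (Finset.univ.filter (fun p : Fin n × Fin n => p.1 < p.2 ∧ x p.2 < x p.1)) with hD
  have hd : ∀ p ∈ D, (p = (a, b)) ∨ (p.1 < p.2 ∧ x p.2 < x p.1) := by
    intro p hp
    rcases Finset.mem_insert.mp hp with h | h
    · exact Or.inl h
    · exact Or.inr (by simpa using h)
  -- case analysis machine
  have main : ∀ p ∈ D, (F p).1 < (F p).2 ∧ x (t (F p).2) < x (t (F p).1) ∧ F (F p) = p := by
    intro p hp
    obtain ⟨i, j⟩ := p
    rcases hd _ hp with heq | ⟨hij, hinv⟩
    · rw [heq]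
      have hc : C (a, b) := Or.inl ⟨rfl, le_refl _⟩
      rw [hFkeep _ hc, hFkeep _ hc]
      exact ⟨hab, by rw [htba, htab]; exact hx, rfl⟩
    · dsimp only at hij hinv
      by_cases hc : C (i, j)
      · rw [hFkeep _ hc, hFkeep _ hc]
        refine ⟨hij, ?_, rfl⟩
        dsimp only
        rcases hc with ⟨h1, h2⟩ | ⟨h1, h2⟩
        · dsimp only at h1 h2
          rcases eq_or_lt_of_le h2 with hjb | hjb
          · rw [h1] at hinv; rw [hjb] at hinv
            exact absurd hinv (not_lt.mpr hx.le)
          · have hja : j ≠ a := ne_of_gt (h1 ▸ hij)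
            rw [h1, htab, htfix j hja (ne_of_lt hjb)]
            rw [h1] at hinv
            exact lt_trans hinv hx
        · dsimp only at h1 h2
          have hia : i ≠ a := ne_of_gt h2
          have hib : i ≠ b := ne_of_lt (h1 ▸ hij)
          rw [h1, htba, htfix i hia hib]
          rw [h1] at hinv
          exact lt_trans hx hinv
      · have hc' := hc
        simp only [hC, not_or, not_and, not_le, not_lt] at hc'
        obtain ⟨hc1, hc2⟩ := hc'
        by_cases hia : i = a
        · -- S1 : i = a, b < j
          have hbj : b < j := hc1 hia
          have hja : j ≠ a := ne_of_gt (lt_trans hab hbj)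
          have hjb : j ≠ b := ne_of_gt hbj
          have hFp : F (i, j) = (b, j) := by
            rw [hFswap _ hc]; dsimp only; rw [hia, htab, htfix j hja hjb]
          rw [hFp]
          refine ⟨hbj, ?_, ?_⟩
          · dsimp only
            rw [htba, htfix j hja hjb, ← hia]
            exact hinv
          · have hcb : ¬ C (b, j) := by
              simp only [hC, not_or, not_and, not_le, not_lt]
              exact ⟨fun h => absurd h.symm (ne_of_lt hab), fun h => absurd h hjb⟩
            rw [hFswap _ hcb]; dsimp only
            rw [htba, htfix j hja hjb, ← hia]
        · by_cases hib : i = b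
          · -- S2 : i = b < j
            have hbj : b < j := hib ▸ hij
            have hja : j ≠ a := ne_of_gt (lt_trans hab hbj)
            have hjb : j ≠ b := ne_of_gt hbj
            have hFp : F (i, j) = (a, j) := by
              rw [hFswap _ hc]; dsimp only; rw [hib, htba, htfix j hja hjb]
            rw [hFp]
            refine ⟨lt_trans hab hbj, ?_, ?_⟩
            · dsimp only
              rw [htab, htfix j hja hjb, ← hib]
              exact hinv
            · have hcb : ¬ C (a, j) := by
                simp only [hC, not_or, not_and, not_le, not_lt]
                exact ⟨fun _ => hbj, fun h => absurd h hjb⟩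
              rw [hFswap _ hcb]; dsimp only
              rw [htab, htfix j hja hjb, ← hib]
          · by_cases hja : j = a
            · -- S3 : j = a, i < a
              have hiaa : i < a := hja ▸ hij
              have hFp : F (i, j) = (i, b) := by
                rw [hFswap _ hc]; dsimp only; rw [hja, htab, htfix i hia hib]
              rw [hFp]
              refine ⟨lt_trans hiaa hab, ?_, ?_⟩
              · dsimp only
                rw [htba, htfix i hia hib, ← hja]
                exact hinv
              · have hcb : ¬ C (i, b) := by
                  simp only [hC, not_or, not_and, not_le, not_lt]
                  exact ⟨fun h => absurd h hia, fun _ => le_of_lt hiaa⟩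
                rw [hFswap _ hcb]; dsimp only
                rw [htba, htfix i hia hib, ← hja]
            · by_cases hjb : j = b
              · -- S4 : j = b, i < a
                have hiaa : i < a := lt_of_le_of_ne (hc2 hjb) hia
                have hFp : F (i, j) = (i, a) := by
                  rw [hFswap _ hc]; dsimp only; rw [hjb, htba, htfix i hia hib]
                rw [hFp]
                refine ⟨hiaa, ?_, ?_⟩
                · dsimp only
                  rw [htab, htfix i hia hib, ← hjb]
                  exact hinv
                · have hcb : ¬ C (i, a) := by
                    simp only [hC, not_or, not_and, not_le, not_lt]
                    exact ⟨fun h => absurd h hia, fun h => absurd h (ne_of_lt hab)⟩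
                  rw [hFswap _ hcb]; dsimp only
                  rw [htab, htfix i hia hib, ← hjb]
              · -- S5
                have hFp : F (i, j) = (i, j) := by
                  rw [hFswap _ hc]; dsimp only; rw [htfix i hia hib, htfix j hja hjb]
                rw [hFp]
                refine ⟨hij, ?_, ?_⟩
                · dsimp only
                  rw [htfix i hia hib, htfix j hja hjb]
                  exact hinv
                · rw [hFswap _ hc]; dsimp only
                  rw [htfix i hia hib, htfix j hja hjb]
  -- conclude
  have hmaps : ∀ p ∈ D, F p ∈ Finset.univ.filter
      (fun p : Fin n × Fin n => p.1 < p.2 ∧ (x * t) p.2 < (x * t) p.1) := by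
    intro p hp
    obtain ⟨h1, h2, _⟩ := main p hp
    simp only [Finset.mem_filter, Finset.mem_univ, true_and]
    exact ⟨h1, by rw [hxt, hxt]; exact h2⟩
  have hinj : Set.InjOn F D := by
    intro p hp p' hp' h
    have e1 := (main p hp).2.2
    have e2 := (main p' hp').2.2
    rw [← e1, h, e2]
  have hcard : D.card = len x + 1 := by
    rw [hD, Finset.card_insert_of_notMem]
    · rfl
    · simp only [Finset.mem_filter, Finset.mem_univ, true_and, not_and]
      exact fun _ => not_lt.mpr hx.le
  calc len x + 1 = D.card := hcard.symm
    _ ≤ _ := Finset.card_le_card_of_injOn F hmaps hinj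


lemma step_ineq (w : Equiv.Perm (Fin n)) {l₀ : List (Fin n)} {a q : Fin n}
    (hnd : (q :: (l₀ ++ [a])).Nodup)
    (hch : (q :: (l₀ ++ [a])).Chain' (fun u v => w v < w u))
    (haq : a < q) :
    len (w * cycPerm l₀ q) + 1 ≤ len (w * cycPerm (l₀ ++ [a]) q) := by
  set x := w * cycPerm l₀ q with hx
  have hrw : w * cycPerm (l₀ ++ [a]) q = x * Equiv.swap a q := by
    rw [cycPerm_concat, hx, mul_assoc]
  rw [hrw]
  apply len_mul_swap_ge x haq
  have hanl : a ∉ l₀ := by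
    have := hnd.of_cons
    rw [List.nodup_append] at this
    exact fun h => this.2.2 a h a (List.mem_singleton_self a) rfl
  have hxa : x a = w a := by
    rw [hx, Equiv.Perm.mul_apply, cycPerm_fix (ne_of_lt haq) hanl]
  rcases eq_or_ne l₀ [] with rfl | hl₀
  · have : x q = w q := by rw [hx]; rfl
    rw [hxa, this]
    have := hch.rel_head
    simpa using this
  · have hnd' : (q :: l₀).Nodup := by
      have : (q :: l₀).Sublist (q :: (l₀ ++ [a])) :=
        List.cons_sublist_cons.mpr (List.sublist_append_left l₀ [a])
      exact hnd.sublist this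
    have hxq : x q = w (l₀.getLast hl₀) := by
      rw [hx, Equiv.Perm.mul_apply, cycPerm_apply_q hl₀ hnd']
    rw [hxa, hxq]
    -- chain gives relation between getLast (q::l₀) and a
    have hch2 := (List.isChain_append.mp (by rw [List.cons_append]; exact hch)).2.2
    have hgl : (q :: l₀).getLast (List.cons_ne_nil q l₀) = l₀.getLast hl₀ :=
      List.getLast_cons hl₀
    have := hch2 ((q :: l₀).getLast (List.cons_ne_nil q l₀))
      (by rw [List.getLast?_eq_getLast (List.cons_ne_nil q l₀)]; rfl) a rfl
    rw [hgl] at this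
    exact this

lemma len_cycPerm_ge (w : Equiv.Perm (Fin n)) {l : List (Fin n)} {q : Fin n}
    (hnd : (q :: l).Nodup) (hch : (q :: l).Chain' (fun u v => w v < w u))
    (hlt : ∀ i ∈ l, i < q) :
    len w + l.length ≤ len (w * cycPerm l q) := by
  induction l using List.reverseRecOn with
  | nil => simp [cycPerm]
  | append_singleton l₀ a ih =>
      have hnd' : (q :: l₀).Nodup :=
        hnd.sublist (List.cons_sublist_cons.mpr (List.sublist_append_left l₀ [a]))
      have hch' : (q :: l₀).Chain' (fun u v => w v < w u) :=
        (List.isChain_append.mp (by rw [List.cons_append]; exact hch)).1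
      have h1 := ih hnd' hch' (fun i hi => hlt i (List.mem_append_left _ hi))
      have h2 := step_ineq w hnd hch (hlt a (List.mem_append_right _ (List.mem_singleton_self a)))
      simp only [List.length_append, List.length_singleton]
      omega

lemma len_cycPerm_dropLast (w : Equiv.Perm (Fin n)) {l : List (Fin n)} {q : Fin n}
    (hne : l ≠ []) (hnd : (q :: l).Nodup)
    (hch : (q :: l).Chain' (fun u v => w v < w u))
    (hlt : ∀ i ∈ l, i < q)
    (hlen : len (w * cycPerm l q) = len w + l.length) :
    len (w * cycPerm l.dropLast q) = len w + l.dropLast.length := by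
  have hdec : l.dropLast ++ [l.getLast hne] = l := List.dropLast_append_getLast hne
  have hnd2 : (q :: (l.dropLast ++ [l.getLast hne])).Nodup := by rw [hdec]; exact hnd
  have hch2 : (q :: (l.dropLast ++ [l.getLast hne])).Chain' (fun u v => w v < w u) := by
    rw [hdec]; exact hch
  have h2 := step_ineq w hnd2 hch2 (hlt _ (List.getLast_mem hne))
  rw [hdec] at h2
  have hnd' : (q :: l.dropLast).Nodup :=
    hnd2.sublist (List.cons_sublist_cons.mpr (List.sublist_append_left _ _))
  have hch' : (q :: l.dropLast).Chain' (fun u v => w v < w u) :=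
    (List.isChain_append.mp (by rw [List.cons_append]; exact hch2)).1
  have h1 := len_cycPerm_ge w hnd' hch'
    (fun i hi => hlt i (List.dropLast_subset l hi))
  have hll : l.length = l.dropLast.length + 1 := by
    conv_lhs => rw [← hdec]
    simp
  omega


lemma disjoint_prod_tail {c : List (Fin n) × Fin n} {T : List (List (Fin n) × Fin n)}
    (hrel : ∀ d ∈ T, ∀ x ∈ c.2 :: c.1, x ∉ d.2 :: d.1) :
    Equiv.Perm.Disjoint (cycPerm c.1 c.2) ((T.map (fun d => cycPerm d.1 d.2)).prod) := by
  apply Equiv.Perm.disjoint_prod_right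
  intro g hg
  obtain ⟨d, hd, rfl⟩ := List.mem_map.mp hg
  exact cycPerm_disjoint (hrel d hd)

lemma inv_count {w : Equiv.Perm (Fin n)} {κ : ℕ} {L : List (List (Fin n) × Fin n)}
    (h1 : ∀ c ∈ L, IsSpecialCycle w κ c.1 c.2)
    (h2 : L.Pairwise (fun c d => ∀ x ∈ c.2 :: c.1, x ∉ d.2 :: d.1)) :
    ((L.map (fun c => cycPerm c.1 c.2)).prod).support.card
      = (L.map (fun c => c.1.length)).sum
        + (((L.map (fun c => cycPerm c.1 c.2)).prod).support.filter
            (fun x : Fin n => κ ≤ (x : ℕ))).card := by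
  induction L with
  | nil => simp
  | cons c T ih =>
      obtain ⟨hrel, h2'⟩ := List.pairwise_cons.mp h2
      have DJ := disjoint_prod_tail hrel
      obtain ⟨hne, hnd, hbd, hq, hch, hlen⟩ := h1 c ((List.mem_cons_self (a := c) (l := T)))
      have hsupc : (cycPerm c.1 c.2).support = (c.2 :: c.1).toFinset :=
        support_cycPerm hne hnd
      have hdisj : Disjoint (cycPerm c.1 c.2).support
          ((T.map (fun d => cycPerm d.1 d.2)).prod).support :=
        Equiv.Perm.Disjoint.disjoint_support DJ
      have hsupm : ((c :: T).map (fun d => cycPerm d.1 d.2)).prod.support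
          = (cycPerm c.1 c.2).support ∪ ((T.map (fun d => cycPerm d.1 d.2)).prod).support := by
        rw [List.map_cons, List.prod_cons]
        exact Equiv.Perm.Disjoint.support_mul DJ
      have hcard1 : (cycPerm c.1 c.2).support.card = c.1.length + 1 := by
        rw [hsupc, List.toFinset_card_of_nodup hnd, List.length_cons]
      have hfilt : (cycPerm c.1 c.2).support.filter (fun x : Fin n => κ ≤ (x : ℕ)) = {c.2} := by
        rw [hsupc]
        ext x
        simp only [Finset.mem_filter, List.mem_toFinset, List.mem_cons, Finset.mem_singleton]
        constructor
        · rintro ⟨hx | hx, hκ⟩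
          · exact hx
          · exact absurd hκ (not_le.mpr (hbd x hx))
        · rintro rfl
          exact ⟨Or.inl rfl, hq⟩
      rw [List.map_cons, List.prod_cons, Equiv.Perm.Disjoint.support_mul DJ,
        Finset.card_union_of_disjoint hdisj, Finset.filter_union,
        Finset.card_union_of_disjoint (Finset.disjoint_filter_filter hdisj),
        hfilt, hcard1, List.map_cons, List.sum_cons]
      have := ih (fun d hd => h1 d (List.mem_cons_of_mem _ hd)) h2'
      rw [this]
      simp only [Finset.card_singleton]
      ring

lemma inv_of_special {w u : Equiv.Perm (Fin n)} {κ p : ℕ}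
    (h : SpecialSuperior w u κ p) :
    (w⁻¹ * u).support.card
      = p + ((w⁻¹ * u).support.filter (fun x : Fin n => κ ≤ (x : ℕ))).card := by
  obtain ⟨L, h1, h2, hu, hp⟩ := h
  have : w⁻¹ * u = (L.map (fun c => cycPerm c.1 c.2)).prod := by
    rw [hu]; group
  rw [this, inv_count h1 h2, hp]


lemma card_split (S : Finset (Fin n)) (a b : Fin n) (hab : a ≠ b) :
    S.card = (S \ {a, b}).card
      + ((if a ∈ S then 1 else 0) + (if b ∈ S then 1 else 0)) := by
  have h1 : S \ {a, b} = (S.erase a).erase b := by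
    ext x
    simp only [Finset.mem_sdiff, Finset.mem_erase, Finset.mem_insert,
      Finset.mem_singleton, not_or]
    tauto
  rw [h1]
  by_cases ha : a ∈ S <;> by_cases hb : b ∈ S
  · have e2 : (S.erase a).card + 1 = S.card := Finset.card_erase_add_one ha
    have hb' : b ∈ S.erase a := Finset.mem_erase.mpr ⟨(Ne.symm hab), hb⟩
    have e1 : ((S.erase a).erase b).card + 1 = (S.erase a).card :=
      Finset.card_erase_add_one hb'
    simp only [ha, hb, if_true]
    omega
  · have e2 : (S.erase a).card + 1 = S.card := Finset.card_erase_add_one ha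
    have hb' : b ∉ S.erase a := fun h => hb (Finset.mem_erase.mp h).2
    rw [Finset.erase_eq_of_notMem hb']
    simp only [ha, hb, if_true, if_false]
    omega
  · rw [Finset.erase_eq_of_notMem ha]
    have e1 : (S.erase b).card + 1 = S.card := Finset.card_erase_add_one hb
    simp only [ha, hb, if_true, if_false]
    omega
  · rw [Finset.erase_eq_of_notMem ha, Finset.erase_eq_of_notMem hb]
    simp only [ha, hb, if_false]
    omega

lemma filter_sdiff_pair (S : Finset (Fin n)) (a b : Fin n) (P : Fin n → Prop)
    [DecidablePred P] :
    (S.filter P) \ {a, b} = (S \ {a, b}).filter P := by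
  ext x
  simp only [Finset.mem_sdiff, Finset.mem_filter, Finset.mem_insert, Finset.mem_singleton]
  tauto

end Helpers

section Helpers2
variable {n : ℕ}

lemma cycPerm_head {l : List (Fin n)} {q : Fin n} (hne : l ≠ [])
    (hnd : (q :: l).Nodup) : cycPerm l q (l.head hne) = q := by
  match l, hne with
  | i :: t, _ =>
      simp only [List.head_cons]
      rw [cycPerm_cons, Equiv.Perm.mul_apply]
      simp only [List.nodup_cons, List.mem_cons, not_or] at hnd
      rw [cycPerm_fix (fun h => hnd.1.1 h.symm) hnd.2.1, Equiv.swap_apply_left]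

lemma map_prod_fix (T : List (List (Fin n) × Fin n)) (x : Fin n)
    (h : ∀ d ∈ T, cycPerm d.1 d.2 x = x) :
    ((T.map fun d => cycPerm d.1 d.2).prod) x = x := by
  induction T with
  | nil => rfl
  | cons d T ih =>
      rw [List.map_cons, List.prod_cons, Equiv.Perm.mul_apply,
        ih (fun e he => h e (List.mem_cons_of_mem _ he)), h d ((List.mem_cons_self (a := d) (l := T)))]

end Helpers2
theorem stmt5 {n : ℕ} (w u : Equiv.Perm (Fin n)) (k p : ℕ) (kf : Fin n)
    (hkf : (kf : ℕ) = k - 1) (hk1 : 1 ≤ k)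
    (h1 : SpecialSuperior w u (k - 1) p) (h2 : ¬ SpecialSuperior w u k p) :
    (∃! q : Fin n, (q : ℕ) < k - 1 ∧
      SpecialSuperior w (u * Equiv.swap q kf) (k - 1) (p - 1)) ∧
    (∀ q' : Fin n, k ≤ (q' : ℕ) →
      ¬ SpecialSuperior w (u * Equiv.swap kf q') (k - 1) (p - 1)) := by
  classical
  have h1' := h1
  obtain ⟨L, hL1, hL2, hLu, hLp⟩ := h1
  -- Step 1: find the cycle with apex kf
  have hex : ∃ c ∈ L, c.2 = kf := by
    by_contra hno
    push_neg at hno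
    apply h2
    refine ⟨L, ?_, hL2, hLu, hLp⟩
    intro c hc
    obtain ⟨hne, hnd, hbd, hq, hch, hlen⟩ := hL1 c hc
    have hne2 : ((c.2 : ℕ)) ≠ k - 1 := by
      intro h
      exact hno c hc (Fin.ext (by rw [h, hkf]))
    exact ⟨hne, hnd, fun i hi => lt_of_lt_of_le (hbd i hi) (Nat.sub_le k 1),
      by omega, hch, hlen⟩
  obtain ⟨c, hcL, hc2⟩ := hex
  subst hc2
  obtain ⟨hne, hnd, hbd, hqk, hch, hlen⟩ := hL1 c hcL
  obtain ⟨A, B, hLsplit⟩ := List.append_of_mem hcL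
  set gl := c.1.getLast hne with hgldef
  have hglmem : gl ∈ c.1 := List.getLast_mem hne
  have hglk : (gl : ℕ) < k - 1 := hbd _ hglmem
  have hglne : gl ≠ c.2 := by
    intro h
    rw [h, hkf] at hglk
    omega
  set hd0 := c.1.head hne with hhddef
  have hhdmem : hd0 ∈ c.1 := List.head_mem hne
  have hhdk : (hd0 : ℕ) < k - 1 := hbd _ hhdmem
  set v := w⁻¹ * u with hvdef
  have hvprod : v = (L.map fun d => cycPerm d.1 d.2).prod := by
    rw [hvdef, hLu]; group
  -- pairwise disjointness facts
  rw [hLsplit] at hL2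
  obtain ⟨pwA, pwCB, cross⟩ := List.pairwise_append.mp hL2
  obtain ⟨relcB, pwB⟩ := List.pairwise_cons.mp pwCB
  have hPWA : ∀ d ∈ A, ∀ x ∈ c.2 :: c.1, x ∉ d.2 :: d.1 := by
    intro d hdA x hx hxd
    exact cross d hdA c ((List.mem_cons_self (a := c) (l := B))) x hxd hx
  have hPWB : ∀ d ∈ B, ∀ x ∈ c.2 :: c.1, x ∉ d.2 :: d.1 := relcB
  have hfixA : ∀ x ∈ c.2 :: c.1, ((A.map fun d => cycPerm d.1 d.2).prod) x = x := by
    intro x hx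
    refine map_prod_fix _ _ (fun d hdA => ?_)
    have hnm := hPWA d hdA x hx
    simp only [List.mem_cons, not_or] at hnm
    exact cycPerm_fix hnm.1 hnm.2
  have hfixB : ∀ x ∈ c.2 :: c.1, ((B.map fun d => cycPerm d.1 d.2).prod) x = x := by
    intro x hx
    refine map_prod_fix _ _ (fun d hdB => ?_)
    have hnm := hPWB d hdB x hx
    simp only [List.mem_cons, not_or] at hnm
    exact cycPerm_fix hnm.1 hnm.2
  have hvsplit : v = (A.map fun d => cycPerm d.1 d.2).prod *
      (cycPerm c.1 c.2 * (B.map fun d => cycPerm d.1 d.2).prod) := by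
    rw [hvprod, hLsplit, List.map_append, List.prod_append, List.map_cons, List.prod_cons]
  have hvkf : v c.2 = gl := by
    rw [hvsplit, Equiv.Perm.mul_apply, Equiv.Perm.mul_apply,
      hfixB c.2 (List.mem_cons_self), cycPerm_apply_q hne hnd]
    exact hfixA gl (List.mem_cons_of_mem _ hglmem)
  have hvhd : v hd0 = c.2 := by
    rw [hvsplit, Equiv.Perm.mul_apply, Equiv.Perm.mul_apply,
      hfixB hd0 (List.mem_cons_of_mem _ hhdmem), cycPerm_head hne hnd]
    exact hfixA c.2 (List.mem_cons_self)
  have hsupkf : c.2 ∈ v.support := by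
    rw [Equiv.Perm.mem_support, hvkf]
    exact hglne
  have hp1 : 1 ≤ p := by
    rw [hLsplit] at hLp
    simp only [List.map_append, List.sum_append, List.map_cons, List.sum_cons] at hLp
    have := List.length_pos_iff.mpr hne
    omega
  have E1 : v.support.card = p +
      (v.support.filter (fun x : Fin n => k - 1 ≤ (x : ℕ))).card := by
    have := inv_of_special h1'
    rw [← hvdef] at this
    exact this
  -- lengths sums
  rw [hLsplit] at hLp
  simp only [List.map_append, List.sum_append, List.map_cons, List.sum_cons] at hLp
  -- commuting of swap with PB
  have hdisjt : ∀ g ∈ (B.map fun d => cycPerm d.1 d.2),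
      (Equiv.swap gl c.2).Disjoint g := by
    intro g hg
    obtain ⟨d, hdB, rfl⟩ := List.mem_map.mp hg
    intro x
    by_cases hx : x = gl ∨ x = c.2
    · right
      have hmem : x ∈ c.2 :: c.1 := by
        rcases hx with rfl | rfl
        · exact List.mem_cons_of_mem _ hglmem
        · exact List.mem_cons_self
      have hnm := hPWB d hdB x hmem
      simp only [List.mem_cons, not_or] at hnm
      exact cycPerm_fix hnm.1 hnm.2
    · left
      push_neg at hx
      exact Equiv.swap_apply_of_ne_of_ne hx.1 hx.2
  have hcommB : Commute (Equiv.swap gl c.2) ((B.map fun d => cycPerm d.1 d.2).prod) :=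
    Commute.list_prod_right _ _ (fun g hg => (hdisjt g hg).commute)
  have hzeta : cycPerm c.1 c.2 * Equiv.swap gl c.2 = cycPerm c.1.dropLast c.2 := by
    conv_lhs => rw [← List.dropLast_append_getLast hne]
    rw [cycPerm_concat, mul_assoc, Equiv.swap_mul_self, mul_one]
  have hprodnew : u * Equiv.swap gl c.2 = w * ((A.map fun d => cycPerm d.1 d.2).prod *
      (cycPerm c.1.dropLast c.2 * (B.map fun d => cycPerm d.1 d.2).prod)) := by
    have : u = w * v := by rw [hvdef]; group
    rw [this, hvsplit, ← hzeta]
    calc w * ((A.map fun d => cycPerm d.1 d.2).prod *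
          (cycPerm c.1 c.2 * (B.map fun d => cycPerm d.1 d.2).prod)) * Equiv.swap gl c.2
        = w * ((A.map fun d => cycPerm d.1 d.2).prod *
          (cycPerm c.1 c.2 * ((B.map fun d => cycPerm d.1 d.2).prod * Equiv.swap gl c.2))) := by
          group
      _ = w * ((A.map fun d => cycPerm d.1 d.2).prod *
          (cycPerm c.1 c.2 * (Equiv.swap gl c.2 * (B.map fun d => cycPerm d.1 d.2).prod))) := by
          rw [← hcommB.eq]
      _ = _ := by group
  have hsubmem : ∀ x : Fin n, x ∈ c.2 :: c.1.dropLast → x ∈ c.2 :: c.1 := by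
    intro x hx
    rcases List.mem_cons.mp hx with rfl | hx
    · exact List.mem_cons_self
    · exact List.mem_cons_of_mem _ (List.dropLast_subset c.1 hx)
  -- Existence
  have hexist : SpecialSuperior w (u * Equiv.swap gl c.2) (k - 1) (p - 1) := by
    rcases eq_or_ne c.1.dropLast [] with hdl | hdl
    · -- the cycle has length 1 and disappears
      have hlen1 : c.1.length = 1 := by
        have h0 : c.1.dropLast.length = c.1.length - 1 := List.length_dropLast
        rw [hdl] at h0
        have := List.length_pos_iff.mpr hne
        simp only [List.length_nil] at h0
        omega
      refine ⟨A ++ B, ?_, ?_, ?_, ?_⟩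
      · intro d hdAB
        rcases List.mem_append.mp hdAB with hdA | hdB
        · exact hL1 d (by rw [hLsplit]; exact List.mem_append_left _ hdA)
        · exact hL1 d (by rw [hLsplit]
                          exact List.mem_append_right _ (List.mem_cons_of_mem _ hdB))
      · exact hL2.sublist ((List.Sublist.refl A).append (List.sublist_cons_self c B))
      · rw [hprodnew]
        rw [hdl]
        simp only [cycPerm, List.map_nil, List.prod_nil, one_mul]
        rw [List.map_append, List.prod_append]
      · simp only [List.map_append, List.sum_append]
        omega
    · refine ⟨A ++ (c.1.dropLast, c.2) :: B, ?_, ?_, ?_, ?_⟩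
      · intro d hdAB
        rcases List.mem_append.mp hdAB with hdA | hdB
        · exact hL1 d (by rw [hLsplit]; exact List.mem_append_left _ hdA)
        · rcases List.mem_cons.mp hdB with rfl | hdB
          · -- the new cycle
            have hndd : ((c.2 : Fin n) :: c.1.dropLast).Nodup :=
              hnd.sublist (List.cons_sublist_cons.mpr (List.dropLast_sublist c.1))
            have hchd : ((c.2 : Fin n) :: c.1.dropLast).Chain'
                (fun a b => w b < w a) := by
              have hch2 : ((c.2 :: c.1.dropLast) ++ [gl]).Chain' (fun a b => w b < w a) := by
                rw [List.cons_append, List.dropLast_append_getLast hne]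
                exact hch
              exact (List.isChain_append.mp hch2).1
            have hlt : ∀ i ∈ c.1, i < c.2 := by
              intro i hi
              rw [Fin.lt_def]
              have := hbd i hi
              omega
            refine ⟨hdl, hndd, fun i hi => hbd i (List.dropLast_subset c.1 hi), hqk,
              hchd, ?_⟩
            exact len_cycPerm_dropLast w hne hnd hch hlt hlen
          · exact hL1 d (by rw [hLsplit]
                            exact List.mem_append_right _ (List.mem_cons_of_mem _ hdB))
      · refine List.pairwise_append.mpr ⟨pwA, ?_, ?_⟩
        · refine List.pairwise_cons.mpr ⟨?_, pwB⟩
          intro d hdB x hx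
          exact relcB d hdB x (hsubmem x hx)
        · intro a haA b hbB
          rcases List.mem_cons.mp hbB with rfl | hbB
          · intro x hx hmem
            exact cross a haA c ((List.mem_cons_self (a := c) (l := B))) x hx (hsubmem x hmem)
          · exact cross a haA b (List.mem_cons_of_mem _ hbB)
      · rw [hprodnew, List.map_append, List.prod_append, List.map_cons, List.prod_cons]
      · simp only [List.map_append, List.sum_append, List.map_cons, List.sum_cons]
        have hdll : c.1.dropLast.length = c.1.length - 1 := List.length_dropLast
        have := List.length_pos_iff.mpr hne
        omega
  have hbig2 : k - 1 ≤ ((c.2 : ℕ)) := le_of_eq hkf.symm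
  constructor
  · -- existence and uniqueness
    refine ⟨gl, ⟨hglk, hexist⟩, ?_⟩
    rintro y ⟨hyk, hss⟩
    have hykf : y ≠ c.2 := by
      intro h
      rw [h, hkf] at hyk
      omega
    set v' := v * Equiv.swap y c.2 with hv'def
    have E2 : v'.support.card = (p - 1) +
        (v'.support.filter (fun x : Fin n => k - 1 ≤ (x : ℕ))).card := by
      have h3 := inv_of_special hss
      have hrw : w⁻¹ * (u * Equiv.swap y c.2) = v' := by rw [hv'def, hvdef]; group
      rw [hrw] at h3
      exact h3
    have happ : ∀ x : Fin n, v' x = v (Equiv.swap y c.2 x) := fun x => rfl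
    have hT : v'.support \ {y, c.2} = v.support \ {y, c.2} := by
      ext x
      simp only [Finset.mem_sdiff, Finset.mem_insert, Finset.mem_singleton, not_or,
        Equiv.Perm.mem_support]
      constructor
      · rintro ⟨hx, h1x, h2x⟩
        refine ⟨?_, h1x, h2x⟩
        rwa [happ, Equiv.swap_apply_of_ne_of_ne h1x h2x] at hx
      · rintro ⟨hx, h1x, h2x⟩
        refine ⟨?_, h1x, h2x⟩
        rwa [happ, Equiv.swap_apply_of_ne_of_ne h1x h2x]
    have hyS' : y ∈ v'.support ↔ gl ≠ y := by
      rw [Equiv.Perm.mem_support, happ, Equiv.swap_apply_left, hvkf]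
    have hbigy : ¬ (k - 1 ≤ (y : ℕ)) := not_le.mpr hyk
    have C1 := card_split v.support y c.2 hykf
    have C2 := card_split v'.support y c.2 hykf
    have C1b := card_split (v.support.filter (fun x : Fin n => k - 1 ≤ (x : ℕ)))
      y c.2 hykf
    have C2b := card_split (v'.support.filter (fun x : Fin n => k - 1 ≤ (x : ℕ)))
      y c.2 hykf
    rw [filter_sdiff_pair] at C1b C2b
    rw [hT] at C2
    rw [hT] at C2b
    have hyf1 : y ∉ v.support.filter (fun x : Fin n => k - 1 ≤ (x : ℕ)) :=
      fun h => hbigy (Finset.mem_filter.mp h).2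
    have hyf2 : y ∉ v'.support.filter (fun x : Fin n => k - 1 ≤ (x : ℕ)) :=
      fun h => hbigy (Finset.mem_filter.mp h).2
    have hc2f1 : c.2 ∈ v.support.filter (fun x : Fin n => k - 1 ≤ (x : ℕ)) :=
      Finset.mem_filter.mpr ⟨hsupkf, hbig2⟩
    by_contra hygl
    have hyS'1 : y ∈ v'.support := hyS'.mpr (fun h => hygl h.symm)
    by_cases hkfS' : c.2 ∈ v'.support
    · have hc2f2 : c.2 ∈ v'.support.filter (fun x : Fin n => k - 1 ≤ (x : ℕ)) :=
        Finset.mem_filter.mpr ⟨hkfS', hbig2⟩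
      by_cases hyS : y ∈ v.support <;>
        simp only [hyS, hkfS', hsupkf, hyS'1, hyf1, hyf2, hc2f1, hc2f2,
          if_true, if_false] at C1 C2 C1b C2b <;>
        omega
    · have hc2f2 : c.2 ∉ v'.support.filter (fun x : Fin n => k - 1 ≤ (x : ℕ)) :=
        fun h => hkfS' (Finset.mem_filter.mp h).1
      by_cases hyS : y ∈ v.support <;>
        simp only [hyS, hkfS', hsupkf, hyS'1, hyf1, hyf2, hc2f1, hc2f2,
          if_true, if_false] at C1 C2 C1b C2b <;>
        omega
  · -- no superior element via a swap to the right of k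
    intro q' hq' hss
    have hq'kf : c.2 ≠ q' := by
      intro h
      rw [← h] at hq'
      omega
    set v'' := v * Equiv.swap c.2 q' with hv''def
    have E2 : v''.support.card = (p - 1) +
        (v''.support.filter (fun x : Fin n => k - 1 ≤ (x : ℕ))).card := by
      have h3 := inv_of_special hss
      have hrw : w⁻¹ * (u * Equiv.swap c.2 q') = v'' := by rw [hv''def, hvdef]; group
      rw [hrw] at h3
      exact h3
    have happ : ∀ x : Fin n, v'' x = v (Equiv.swap c.2 q' x) := fun x => rfl
    have hT : v''.support \ {c.2, q'} = v.support \ {c.2, q'} := by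
      ext x
      simp only [Finset.mem_sdiff, Finset.mem_insert, Finset.mem_singleton, not_or,
        Equiv.Perm.mem_support]
      constructor
      · rintro ⟨hx, h1x, h2x⟩
        refine ⟨?_, h1x, h2x⟩
        rwa [happ, Equiv.swap_apply_of_ne_of_ne h1x h2x] at hx
      · rintro ⟨hx, h1x, h2x⟩
        refine ⟨?_, h1x, h2x⟩
        rwa [happ, Equiv.swap_apply_of_ne_of_ne h1x h2x]
    have hglq' : gl ≠ q' := by
      intro h
      rw [h] at hglk
      omega
    have hq'S'' : q' ∈ v''.support := by
      rw [Equiv.Perm.mem_support, happ, Equiv.swap_apply_right, hvkf]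
      exact hglq'
    have hkfS'' : c.2 ∈ v''.support := by
      rw [Equiv.Perm.mem_support, happ, Equiv.swap_apply_left]
      intro h
      have : q' = hd0 := v.injective (by rw [h, hvhd])
      rw [this] at hq'
      omega
    have hbigq' : k - 1 ≤ (q' : ℕ) := by omega
    have C1 := card_split v.support c.2 q' hq'kf
    have C2 := card_split v''.support c.2 q' hq'kf
    have C1b := card_split (v.support.filter (fun x : Fin n => k - 1 ≤ (x : ℕ)))
      c.2 q' hq'kf
    have C2b := card_split (v''.support.filter (fun x : Fin n => k - 1 ≤ (x : ℕ)))
      c.2 q' hq'kf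
    rw [filter_sdiff_pair] at C1b C2b
    rw [hT] at C2
    rw [hT] at C2b
    have hc2f1 : c.2 ∈ v.support.filter (fun x : Fin n => k - 1 ≤ (x : ℕ)) :=
      Finset.mem_filter.mpr ⟨hsupkf, hbig2⟩
    have hc2f2 : c.2 ∈ v''.support.filter (fun x : Fin n => k - 1 ≤ (x : ℕ)) :=
      Finset.mem_filter.mpr ⟨hkfS'', hbig2⟩
    have hq'f2 : q' ∈ v''.support.filter (fun x : Fin n => k - 1 ≤ (x : ℕ)) :=
      Finset.mem_filter.mpr ⟨hq'S'', hbigq'⟩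
    by_cases hq'S : q' ∈ v.support
    · have hq'f1 : q' ∈ v.support.filter (fun x : Fin n => k - 1 ≤ (x : ℕ)) :=
        Finset.mem_filter.mpr ⟨hq'S, hbigq'⟩
      simp only [hq'S, hsupkf, hkfS'', hq'S'', hq'f1, hc2f1, hc2f2, hq'f2,
        if_true, if_false] at C1 C2 C1b C2b
      omega
    · have hq'f1 : q' ∉ v.support.filter (fun x : Fin n => k - 1 ≤ (x : ℕ)) :=
        fun h => hq'S (Finset.mem_filter.mp h).1
      simp only [hq'S, hsupkf, hkfS'', hq'S'', hq'f1, hc2f1, hc2f2, hq'f2,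
        if_true, if_false] at C1 C2 C1b C2b
      omega
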